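/- There is a constant C such that the following holds. Let G be a finite simple graph on n vertices that contains no pair of adjacent vertices both of degree 2, and suppose G admits a 2-valid edge coloring using at least n−k colors, where k ≥ 1. Then n ≤ C·k. -/

import Mathlib

/-!
Call a vertex good if it sees two colors, each of which occurs on a single edge. Under a
`2`-valid coloring a good vertex has degree two, so all its neighbours are bad, and sending a
good vertex `v` to the pair (neighbour `u`, color of `uv`) injects the good vertices into the at
most `2 · #bad` pairs (bad vertex, color at it). Bad vertices are few by double counting the
incidences between vertices and the colors they see: there are at most `2n` of them, minus one
for each vertex seeing at most one color, and at least `2k'`, plus a third of all incidences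
with colors seen by three or more vertices. Every bad vertex is of one of these two kinds, so
`#bad ≤ 3 (2n - 2k') ≤ 6k`, whence `n ≤ 3 · #bad ≤ 18k`.
-/

/-- The palette of a vertex `v` under an edge coloring `c`: the set of colors assigned
to the edges incident to `v`. -/
def palette {V : Type*} {G : SimpleGraph V} {k : ℕ} (c : G.edgeSet → Fin k) (v : V) :
    Set (Fin k) := {i | ∃ e : G.edgeSet, v ∈ (e : Sym2 V) ∧ c e = i}

/-- An edge coloring is `2`-valid if every vertex sees at most two colors. -/
def TwoValid {V : Type*} {G : SimpleGraph V} {k : ℕ} (c : G.edgeSet → Fin k) : Prop :=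
  ∀ v : V, (palette c v).ncard ≤ 2

open Finset

section TwoValidColoring

variable {V : Type*} {G : SimpleGraph V} {k : ℕ} (c : G.edgeSet → Fin k)

noncomputable def paletteFinset (v : V) : Finset (Fin k) :=
  (Set.toFinite (palette c v)).toFinset

variable {c}

theorem mem_paletteFinset {v : V} {i : Fin k} :
    i ∈ paletteFinset c v ↔ ∃ e : G.edgeSet, v ∈ (e : Sym2 V) ∧ c e = i := by
  simp [paletteFinset, palette]

theorem card_paletteFinset (v : V) : #(paletteFinset c v) = (palette c v).ncard :=
  (Set.ncard_eq_toFinset_card _ _).symm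

theorem mem_paletteFinset_of_mem {v : V} (e : G.edgeSet) (hv : v ∈ (e : Sym2 V)) :
    c e ∈ paletteFinset c v :=
  mem_paletteFinset.2 ⟨e, hv, rfl⟩

theorem card_toFinset_coe_edge [DecidableEq V] (e : G.edgeSet) : #(e : Sym2 V).toFinset = 2 :=
  Sym2.card_toFinset_of_not_isDiag _ (G.not_isDiag_of_mem_edgeSet e.2)

theorem exists_adj_and_mk_eq_of_mem {v : V} (e : G.edgeSet) (hv : v ∈ (e : Sym2 V)) :
    ∃ u, G.Adj v u ∧ s(v, u) = e :=
  ⟨_, by rw [← SimpleGraph.mem_edgeSet, Sym2.other_spec hv]; exact e.2, Sym2.other_spec hv⟩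

variable [Fintype V]

variable (c) in
noncomputable def colorSupport (i : Fin k) : Finset V :=
  univ.filter fun v => i ∈ paletteFinset c v

theorem mem_colorSupport {v : V} {i : Fin k} : v ∈ colorSupport c i ↔ i ∈ paletteFinset c v := by
  simp [colorSupport]

theorem sum_card_paletteFinset_eq_sum_card_colorSupport :
    ∑ v, #(paletteFinset c v) = ∑ i, #(colorSupport c i) := by
  simpa [bipartiteAbove, bipartiteBelow, colorSupport] using
    sum_card_bipartiteAbove_eq_sum_card_bipartiteBelow (s := univ) (t := univ)
      (fun v i => i ∈ paletteFinset c v)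

theorem toFinset_subset_colorSupport [DecidableEq V] (e : G.edgeSet) :
    (e : Sym2 V).toFinset ⊆ colorSupport c (c e) := fun _ hv =>
  mem_colorSupport.2 (mem_paletteFinset_of_mem e (Sym2.mem_toFinset.1 hv))

theorem two_le_card_colorSupport (e : G.edgeSet) : 2 ≤ #(colorSupport c (c e)) := by
  classical
  exact card_toFinset_coe_edge e ▸ card_le_card (toFinset_subset_colorSupport e)

theorem eq_of_color_eq_of_card_colorSupport_le_two {e e' : G.edgeSet}
    (he : #(colorSupport c (c e)) ≤ 2) (h : c e' = c e) : e' = e := by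
  classical
  have hsupp : colorSupport c (c e) = (e : Sym2 V).toFinset :=
    (eq_of_subset_of_card_le (toFinset_subset_colorSupport e)
      (by rwa [card_toFinset_coe_edge])).symm
  have hsub : (e' : Sym2 V).toFinset ⊆ (e : Sym2 V).toFinset :=
    hsupp ▸ h ▸ toFinset_subset_colorSupport e'
  have heq := eq_of_subset_of_card_le hsub (by rw [card_toFinset_coe_edge, card_toFinset_coe_edge])
  exact Subtype.ext (Sym2.ext fun x => by rw [← Sym2.mem_toFinset, heq, Sym2.mem_toFinset])

theorem ncard_neighborSet_eq_ncard_palette {v : V}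
    (hv : ∀ i ∈ paletteFinset c v, #(colorSupport c i) ≤ 2) :
    (G.neighborSet v).ncard = (palette c v).ncard := by
  refine Set.ncard_congr (fun u hu => c ⟨s(v, u), hu⟩) (fun u hu => ?_) (fun u u' hu hu' h => ?_)
    (fun i ⟨e, hve, hi⟩ => ?_)
  · exact ⟨_, Sym2.mem_mk_left v u, rfl⟩
  · have hlone := hv _ (mem_paletteFinset_of_mem ⟨s(v, u'), hu'⟩ (Sym2.mem_mk_left v u'))
    have hee := eq_of_color_eq_of_card_colorSupport_le_two hlone h
    exact Sym2.congr_right.1 (congrArg Subtype.val hee)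
  · obtain ⟨u, hadj, hvu⟩ := exists_adj_and_mk_eq_of_mem e hve
    exact ⟨u, hadj, (congrArg c (Subtype.ext hvu)).trans hi⟩

variable (c) in
def IsGoodVertex (v : V) : Prop :=
  2 ≤ #(paletteFinset c v) ∧ ∀ i ∈ paletteFinset c v, #(colorSupport c i) ≤ 2

noncomputable instance : DecidablePred (IsGoodVertex c) :=
  fun _ => inferInstanceAs (Decidable (_ ∧ _))

theorem IsGoodVertex.ncard_neighborSet (htv : TwoValid c) {v : V} (hv : IsGoodVertex c v) :
    (G.neighborSet v).ncard = 2 := by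
  have h := hv.1
  rw [card_paletteFinset] at h
  rw [ncard_neighborSet_eq_ncard_palette hv.2]
  exact le_antisymm (htv v) h

theorem card_isGoodVertex_le (htv : TwoValid c)
    (hG : ∀ u v : V, G.Adj u v → ¬ ((G.neighborSet u).ncard = 2 ∧ (G.neighborSet v).ncard = 2)) :
    #{v | IsGoodVertex c v} ≤ 2 * #{v | ¬ IsGoodVertex c v} := by
  set bad : Finset V := {v | ¬ IsGoodVertex c v}
  calc #{v | IsGoodVertex c v}
      ≤ #(bad.sigma (paletteFinset c)) := by
        refine card_le_card_of_forall_subsingleton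
          (fun v p => ∃ e : G.edgeSet, (e : Sym2 V) = s(v, p.1) ∧ c e = p.2)
          (fun v hv => ?_) (fun p _ v hv v' hv' => ?_)
        · obtain ⟨hv2, -⟩ := (mem_filter.1 hv).2
          obtain ⟨i, hi⟩ := card_pos.1 (by omega : 0 < #(paletteFinset c v))
          obtain ⟨e, hve, rfl⟩ := mem_paletteFinset.1 hi
          obtain ⟨u, hadj, hvu⟩ := exists_adj_and_mk_eq_of_mem e hve
          have hu : ¬ IsGoodVertex c u := fun hu =>
            hG v u hadj ⟨(mem_filter.1 hv).2.ncard_neighborSet htv, hu.ncard_neighborSet htv⟩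
          refine ⟨⟨u, c e⟩, mem_sigma.2 ⟨mem_filter.2 ⟨mem_univ _, hu⟩, ?_⟩, e, hvu.symm, rfl⟩
          exact mem_paletteFinset_of_mem e (hvu ▸ Sym2.mem_mk_right v u)
        · obtain ⟨hv, e, he, hce⟩ := hv
          obtain ⟨-, e', he', hce'⟩ := hv'
          have hlone := (mem_filter.1 hv).2.2 _
            (mem_paletteFinset_of_mem e (he ▸ Sym2.mem_mk_left _ _))
          have hee' : e' = e :=
            eq_of_color_eq_of_card_colorSupport_le_two hlone (hce'.trans hce.symm)
          exact Sym2.congr_left.1 (he.symm.trans (hee' ▸ he'))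
    _ = ∑ u ∈ bad, #(paletteFinset c u) := card_sigma _ _
    _ ≤ #bad * 2 := sum_le_card_nsmul _ _ _ fun u _ => (card_paletteFinset u).trans_le (htv u)
    _ = 2 * #bad := mul_comm _ _

theorem card_filter_card_paletteFinset_le_one_add_sum_le (htv : TwoValid c) :
    #{v | #(paletteFinset c v) ≤ 1} + ∑ v, #(paletteFinset c v) ≤ 2 * Fintype.card V := by
  rw [card_filter, ← sum_add_distrib]
  calc ∑ v, ((if #(paletteFinset c v) ≤ 1 then 1 else 0) + #(paletteFinset c v))
      ≤ ∑ _v : V, 2 := sum_le_sum fun v _ => by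
        have := (card_paletteFinset v).trans_le (htv v)
        split <;> omega
    _ = 2 * Fintype.card V := by simp [mul_comm]

theorem six_mul_add_sum_card_colorSupport_le (hs : Function.Surjective c) :
    6 * k + ∑ i ∈ {i | 2 < #(colorSupport c i)}, #(colorSupport c i)
      ≤ 3 * ∑ i, #(colorSupport c i) := by
  have h6 : 6 * k = ∑ _i : Fin k, 6 := by simp [mul_comm]
  rw [sum_filter, mul_sum, h6, ← sum_add_distrib]
  refine sum_le_sum fun i _ => ?_
  obtain ⟨e, rfl⟩ := hs i
  have := two_le_card_colorSupport (c := c) e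
  split <;> omega

theorem card_not_isGoodVertex_le :
    #{v | ¬ IsGoodVertex c v}
      ≤ #{v | #(paletteFinset c v) ≤ 1} +
          ∑ i ∈ {i | 2 < #(colorSupport c i)}, #(colorSupport c i) := by
  classical
  calc #{v | ¬ IsGoodVertex c v}
      ≤ #(({v | #(paletteFinset c v) ≤ 1} : Finset V) ∪
          ({i | 2 < #(colorSupport c i)} : Finset (Fin k)).biUnion (colorSupport c)) := by
        refine card_le_card fun v hv => ?_
        simp only [IsGoodVertex, mem_filter, mem_univ, true_and, not_and_or, not_le, not_forall,
          mem_union, mem_biUnion, mem_colorSupport] at hv ⊢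
        rcases hv with h | ⟨i, hi, h⟩
        exacts [Or.inl (by omega), Or.inr ⟨i, h, hi⟩]
    _ ≤ _ := (card_union_le _ _).trans (add_le_add_right card_biUnion_le _)

theorem card_not_isGoodVertex_add_six_mul_le (hs : Function.Surjective c) (htv : TwoValid c) :
    #{v | ¬ IsGoodVertex c v} + 6 * k ≤ 6 * Fintype.card V := by
  have h₁ := card_filter_card_paletteFinset_le_one_add_sum_le htv
  have h₂ := six_mul_add_sum_card_colorSupport_le hs
  have h₃ := card_not_isGoodVertex_le (c := c)
  rw [sum_card_paletteFinset_eq_sum_card_colorSupport] at h₁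
  omega

end TwoValidColoring

/-- Linear kernel: there is a constant `C` such that any graph on `n` vertices with no pair
of adjacent degree-two vertices that admits a `2`-valid edge coloring using at least `n - k`
colors (`k ≥ 1`) satisfies `n ≤ C * k`. -/
theorem stmt11 : ∃ C : ℕ, ∀ (V : Type) [Fintype V] (G : SimpleGraph V) (k k' : ℕ),
    1 ≤ k →
    (∀ u v : V, G.Adj u v →
      ¬ ((G.neighborSet u).ncard = 2 ∧ (G.neighborSet v).ncard = 2)) →
    Fintype.card V - k ≤ k' →
    (∃ c : G.edgeSet → Fin k', Function.Surjective c ∧ TwoValid c) →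
    Fintype.card V ≤ C * k := by
  refine ⟨18, fun V _ G k k' _ hG hk' ⟨c, hs, htv⟩ => ?_⟩
  have hpart := card_filter_add_card_filter_not (s := univ) fun v => IsGoodVertex c v
  have hgood := card_isGoodVertex_le htv hG
  have hbad := card_not_isGoodVertex_add_six_mul_le hs htv
  rw [card_univ] at hpart
  omega
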